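/- Let f ∈ C^∞(ℝ^{n+1}) be real-valued, λ ≥ 1, and set L_2 := λ (X_1 f) Σ_{j=1}^N X_j^* X_j. Then for every compact K ⊂ ℝ^{n+1} there exists C_K > 0, depending only on the L^∞(K)-norms of f, of the coefficients a_{jk}, and of their derivatives up to order 2, such that for all v ∈ C_0^∞(K): Im(L_2 v, v) ≥ λ Σ_{j=1}^N Re( ((-iX_1 f) X_j^* X_j v, v) - i ((X_j X_1 f) X_j v, v) ) - C_K ‖v‖_{L²}². -/

import Mathlib

/-!
Write `g = X₁f = -i r` with `r = (iX₁)f` real. Then `Xⱼg = -(iXⱼ)(iX₁)f =: w` is real as well,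
and `Re(-i(g Xⱼ^*Xⱼv, v)) = Im(g Xⱼ^*Xⱼv, v)`: the second-order terms on the two sides agree
exactly, and only `λ Im(w Xⱼv, v)` is left to bound. Pointwise
`Im(w aₖ Dₖv · v̄) = -½ w aₖ ∂ₖ|v|²`, and integrating by parts moves `∂ₖ` onto `w aₖ`, which is
bounded on `K`; hence `|Im(w Xⱼv, v)| ≤ C ‖v‖²` for all `v ∈ C₀^∞(K)`.
-/


open MeasureTheory

noncomputable section

namespace Carleman

/-- The ambient space `ℝ^{n+1}`. -/
abbrev Spc (n : ℕ) : Type := EuclideanSpace ℝ (Fin (n + 1))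

/-- Real coefficients `(a₁,…,a_{n+1})` of a first order operator on `ℝ^{n+1}`. -/
abbrev Coeffs (n : ℕ) : Type := Fin (n + 1) → Spc n → ℝ

variable {n : ℕ}

/-- `k`-th partial derivative `∂ₖ u`. -/
def pd (k : Fin (n + 1)) (u : Spc n → ℂ) (x : Spc n) : ℂ :=
  fderiv ℝ u x (EuclideanSpace.single k (1 : ℝ))

/-- The operator `X = ∑ₖ aₖ Dₖ`, with `Dₖ = -i ∂ₖ`. -/
def Xop (a : Coeffs n) (u : Spc n → ℂ) : Spc n → ℂ :=
  fun x => ∑ k, (a k x : ℂ) * (-Complex.I * pd k u x)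

/-- The function `d = ∑ₖ Dₖ aₖ`. -/
def dfun (a : Coeffs n) (x : Spc n) : ℂ :=
  ∑ k, -Complex.I * (fderiv ℝ (a k) x (EuclideanSpace.single k (1 : ℝ)) : ℂ)

/-- The formal `L²` adjoint `X^* = X + d`. -/
def Xstar (a : Coeffs n) (u : Spc n → ℂ) : Spc n → ℂ :=
  fun x => Xop a u x + dfun a x * u x

/-- All the coefficients are smooth. -/
def SmoothCoeffs (a : Coeffs n) : Prop := ∀ k, ContDiff ℝ (⊤ : ℕ∞) (a k)

/-- `∑ⱼ Xⱼ^* Xⱼ u`. -/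
def sumXsX {N : ℕ} (a : Fin N → Coeffs n) (u : Spc n → ℂ) : Spc n → ℂ :=
  fun x => ∑ j, Xstar (a j) (Xop (a j) u) x

/-- `P₁ = X₁ ∑ⱼ Xⱼ^* Xⱼ + X₀`, where `X₁ = X_{j₁}`. -/
def P1 {N : ℕ} (a0 : Coeffs n) (a : Fin N → Coeffs n) (j1 : Fin N) (u : Spc n → ℂ) :
    Spc n → ℂ :=
  fun x => Xop (a j1) (sumXsX a u) x + Xop a0 u x

/-- The formal adjoint `P₁^* = ∑ⱼ Xⱼ^* Xⱼ X₁^* + X₀^*`. -/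
def P1star {N : ℕ} (a0 : Coeffs n) (a : Fin N → Coeffs n) (j1 : Fin N) (u : Spc n → ℂ) :
    Spc n → ℂ :=
  fun x => (∑ j, Xstar (a j) (Xop (a j) (Xstar (a j1) u)) x) + Xstar a0 u x

/-- A smooth function with purely imaginary values. -/
def SmoothImag (g : Spc n → ℂ) : Prop := ContDiff ℝ (⊤ : ℕ∞) g ∧ ∀ x, (g x).re = 0

/-- `c` is a family of structure functions for the system `a`:
`[X_j, X_k] = ∑ₗ (c j k l) • Xₗ` as operators on smooth functions. -/
def IsInvolutiveWith {N : ℕ} (a : Fin N → Coeffs n)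
    (c : Fin N → Fin N → Fin N → Spc n → ℂ) : Prop :=
  (∀ j k l, SmoothImag (c j k l)) ∧
    ∀ j k, ∀ u : Spc n → ℂ, ContDiff ℝ (⊤ : ℕ∞) u → ∀ x,
      Xop (a j) (Xop (a k) u) x - Xop (a k) (Xop (a j) u) x = ∑ l, c j k l x * Xop (a l) u x

/-- Condition (H1): smooth real vector fields forming a globally involutive system. -/
def CondH1 {N : ℕ} (a : Fin N → Coeffs n) : Prop :=
  (∀ j, SmoothCoeffs (a j)) ∧ ∃ c, IsInvolutiveWith a c

/-- `C₀^∞(K)`: smooth functions supported in the compact set `K`. -/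
def TestOn (K : Set (Spc n)) (u : Spc n → ℂ) : Prop :=
  ContDiff ℝ (⊤ : ℕ∞) u ∧ tsupport u ⊆ K

/-- The weighted function `e^{λ f} u`. -/
def expw (lam : ℝ) (f : Spc n → ℝ) (u : Spc n → ℂ) : Spc n → ℂ :=
  fun x => (Real.exp (lam * f x) : ℂ) * u x

/-- The `L²(ℝ^{n+1})` inner product `(u, v) = ∫ u v̄`. -/
def ip (u v : Spc n → ℂ) : ℂ := ∫ x : Spc n, u x * (starRingEnd ℂ) (v x)

/-- The squared `L²(ℝ^{n+1})` norm. -/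
def l2sq (u : Spc n → ℂ) : ℝ := ∫ x : Spc n, ‖u x‖ ^ 2

/-- The squared Sobolev `H^s(ℝ^{n+1})` norm, via the Fourier transform. -/
def hsSq (s : ℝ) (u : Spc n → ℂ) : ℝ :=
  ∫ ξ : Spc n, (1 + ‖ξ‖ ^ 2) ^ s * ‖VectorFourier.fourierIntegral Real.fourierChar volume (innerₗ (Spc n)) u ξ‖ ^ 2

/-- The real valued function `-iX₁f` (for `f` real valued). -/
def mIXf (a1 : Coeffs n) (f : Spc n → ℝ) (x : Spc n) : ℝ :=
  (-Complex.I * Xop a1 (fun y => (f y : ℂ)) x).re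

/-- The coefficient vector of the real vector field `iX` attached to `a`. -/
def coeffVF (a : Coeffs n) : Spc n → Spc n :=
  fun x => (EuclideanSpace.equiv (Fin (n + 1)) ℝ).symm fun k => a k x

/-- Lie bracket of vector fields. -/
def vfLie (V W : Spc n → Spc n) : Spc n → Spc n :=
  fun x => fderiv ℝ W x (V x) - fderiv ℝ V x (W x)

/-- Iterated commutators of length `m` of the system of vector fields `V`. -/
inductive IsBracket {N : ℕ} (V : Fin N → Spc n → Spc n) : ℕ → (Spc n → Spc n) → Prop
  | base (j : Fin N) : IsBracket V 1 (V j)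
  | lie {p q : ℕ} {W₁ W₂ : Spc n → Spc n} :
      IsBracket V p W₁ → IsBracket V q W₂ → IsBracket V (p + q) (vfLie W₁ W₂)

/-- Hörmander's condition of rank `r`: the vector fields `iX_j` together with their
iterated commutators of length up to `r` span the whole space at every point. -/
def Hormander {N : ℕ} (a : Fin N → Coeffs n) (r : ℕ) : Prop :=
  ∀ x : Spc n,
    Submodule.span ℝ
      {w : Spc n | ∃ m, m ≤ r ∧ ∃ W, IsBracket (fun j => coeffVF (a j)) m W ∧ w = W x} = ⊤

/-- Membership in `L²_loc(ℝ^{n+1})`. -/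
def MemL2loc (g : Spc n → ℂ) : Prop :=
  AEStronglyMeasurable g volume ∧
    ∀ K : Set (Spc n), IsCompact K → IntegrableOn (fun x => ‖g x‖ ^ 2) K volume

/-- Membership in `H^s_loc(ℝ^{n+1})` (`s ≥ 0`), via the Fourier transform. -/
def MemHsLoc (s : ℝ) (g : Spc n → ℂ) : Prop :=
  AEStronglyMeasurable g volume ∧
    ∀ χ : Spc n → ℝ, ContDiff ℝ (⊤ : ℕ∞) χ → HasCompactSupport χ →
      Integrable (fun x => (χ x : ℂ) * g x) volume ∧
        (∫⁻ ξ : Spc n,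
            ENNReal.ofReal ((1 + ‖ξ‖ ^ 2) ^ s) *
              (‖VectorFourier.fourierIntegral Real.fourierChar volume (innerₗ (Spc n))
                (fun x => (χ x : ℂ) * g x) ξ‖₊ : ENNReal) ^ 2) < ⊤

/-- `u` solves `P u = g` weakly on the open set `U`, where `Padj` is the formal
adjoint of `P`: for all test functions `φ` compactly supported in `U`,
`(u, Padj φ) = (g, φ)`. -/
def WeakEqOn (Padj : (Spc n → ℂ) → Spc n → ℂ) (u g : Spc n → ℂ) (U : Set (Spc n)) : Prop :=
  ∀ φ : Spc n → ℂ, ContDiff ℝ (⊤ : ℕ∞) φ → HasCompactSupport φ → tsupport φ ⊆ U →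
    ∫ x : Spc n, u x * (starRingEnd ℂ) (Padj φ x) = ∫ x : Spc n, g x * (starRingEnd ℂ) (φ x)

/-- The operator `P` whose formal adjoint is `Padj` is locally solvable at `x₀`, with data in
the class `S` and solutions in the class `T`: there is a compact set `K` containing `x₀` in its
interior such that for every `g ∈ S` there is `u ∈ T` with `P u = g` (weakly) in the interior
of `K`. -/
def LocSolvAt (Padj : (Spc n → ℂ) → Spc n → ℂ) (S T : (Spc n → ℂ) → Prop)
    (x₀ : Spc n) : Prop :=
  ∃ K : Set (Spc n), IsCompact K ∧ x₀ ∈ interior K ∧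
    ∀ g, S g → ∃ u, T u ∧ WeakEqOn Padj u g (interior K)


/-- `c'_j = ∑ₖ ( ∑ₗ c^{lk}_j + (X_k c_j^{k1}) + d_k c_j^{k1} - 2 d_k c_k^{j1} )`,
where `c^{jk}_l` is coded as `c j k l` and `j1` is the index of `X₁`. -/
def cprime {N : ℕ} (a : Fin N → Coeffs n) (c : Fin N → Fin N → Fin N → Spc n → ℂ)
    (j1 j : Fin N) (x : Spc n) : ℂ :=
  ∑ k, ((∑ l, c l k j x) + Xop (a k) (c k j1 j) x + dfun (a k) x * c k j1 j x -
    2 * dfun (a k) x * c j j1 k x)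

/-- `c''_j = ∑ₖ ( (X_k c_k^{j1}) + (X_k^* c_k^{j1}) + (X_k c_j^{k1}) + (X_k^* c_j^{k1}) )`. -/
def cdprime {N : ℕ} (a : Fin N → Coeffs n) (c : Fin N → Fin N → Fin N → Spc n → ℂ)
    (j1 j : Fin N) (x : Spc n) : ℂ :=
  ∑ k, (Xop (a k) (c j j1 k) x + Xstar (a k) (c j j1 k) x +
    Xop (a k) (c k j1 j) x + Xstar (a k) (c k j1 j) x)

/-- The second order operator
`Q_j = (λ(-iX₁f) + i d₁/2) X_j^* X_j + ∑ₖ i c^{j1}_k X_k^* X_j - iλ (X_jX₁f) X_j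
      + (i/2)(c'_j - (X₁d_j) + 2(X_jd₁) + d₁d_j) X_j`. -/
def Qop {N : ℕ} (a : Fin N → Coeffs n) (c : Fin N → Fin N → Fin N → Spc n → ℂ)
    (j1 : Fin N) (f : Spc n → ℝ) (lam : ℝ) (j : Fin N) (v : Spc n → ℂ) (x : Spc n) : ℂ :=
  ((lam : ℂ) * (-Complex.I * Xop (a j1) (fun y => (f y : ℂ)) x) +
        Complex.I * dfun (a j1) x / 2) * Xstar (a j) (Xop (a j) v) x +
    (∑ k, Complex.I * c j j1 k x * Xstar (a k) (Xop (a j) v) x) -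
    Complex.I * (lam : ℂ) * Xop (a j) (Xop (a j1) (fun y => (f y : ℂ))) x * Xop (a j) v x +
    Complex.I / 2 *
      (cprime a c j1 j x - Xop (a j1) (dfun (a j)) x + 2 * Xop (a j) (dfun (a j1)) x +
        dfun (a j1) x * dfun (a j) x) * Xop (a j) v x

/-- The second order operator
`Q'_j = (λ(-iX₁f) + i d₁/2) X_j^* X_j - ∑ₖ i c^{j1}_k X_j^* X_k - iλ (X_jX₁f) X_j
      + (i/2)(c'_j - c''_j - (X₁d_j) + 2(X_jd₁) + d₁d_j) X_j`. -/
def Qop' {N : ℕ} (a : Fin N → Coeffs n) (c : Fin N → Fin N → Fin N → Spc n → ℂ)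
    (j1 : Fin N) (f : Spc n → ℝ) (lam : ℝ) (j : Fin N) (v : Spc n → ℂ) (x : Spc n) : ℂ :=
  ((lam : ℂ) * (-Complex.I * Xop (a j1) (fun y => (f y : ℂ)) x) +
        Complex.I * dfun (a j1) x / 2) * Xstar (a j) (Xop (a j) v) x -
    (∑ k, Complex.I * c j j1 k x * Xstar (a j) (Xop (a k) v) x) -
    Complex.I * (lam : ℂ) * Xop (a j) (Xop (a j1) (fun y => (f y : ℂ))) x * Xop (a j) v x +
    Complex.I / 2 *
      (cprime a c j1 j x - cdprime a c j1 j x - Xop (a j1) (dfun (a j)) x +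
        2 * Xop (a j) (dfun (a j1)) x + dfun (a j1) x * dfun (a j) x) * Xop (a j) v x

/-- The coefficient of the first order operator
`L₁ = ∑ⱼ [ λ dⱼ(Xⱼf) + λ(Xⱼ²f) - λ²(Xⱼf)² ] X₁`. -/
def L1coef {N : ℕ} (a : Fin N → Coeffs n) (f : Spc n → ℝ) (lam : ℝ) (x : Spc n) : ℂ :=
  ∑ j, ((lam : ℂ) * dfun (a j) x * Xop (a j) (fun y => (f y : ℂ)) x +
    (lam : ℂ) * Xop (a j) (Xop (a j) (fun y => (f y : ℂ))) x -
    (lam : ℂ) ^ 2 * Xop (a j) (fun y => (f y : ℂ)) x ^ 2)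

/-- The multiplication operator
`L₀ = ∑ⱼ [ λ(X₁dⱼ)(Xⱼf) + λ dⱼ(X₁Xⱼf) + λ(X₁Xⱼ²f) - 2λ²(Xⱼf)(X₁Xⱼf)
      + (X₁f)(λ² dⱼ(Xⱼf) + λ²(Xⱼ²f) + λ³(iXⱼf)²) ] + λ(X₀f)`. -/
def L0coef {N : ℕ} (a0 : Coeffs n) (a : Fin N → Coeffs n) (j1 : Fin N) (f : Spc n → ℝ)
    (lam : ℝ) (x : Spc n) : ℂ :=
  (∑ j, ((lam : ℂ) * Xop (a j1) (dfun (a j)) x * Xop (a j) (fun y => (f y : ℂ)) x +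
      (lam : ℂ) * dfun (a j) x * Xop (a j1) (Xop (a j) (fun y => (f y : ℂ))) x +
      (lam : ℂ) * Xop (a j1) (Xop (a j) (Xop (a j) (fun y => (f y : ℂ)))) x -
      2 * (lam : ℂ) ^ 2 * Xop (a j) (fun y => (f y : ℂ)) x *
        Xop (a j1) (Xop (a j) (fun y => (f y : ℂ))) x +
      Xop (a j1) (fun y => (f y : ℂ)) x *
        ((lam : ℂ) ^ 2 * dfun (a j) x * Xop (a j) (fun y => (f y : ℂ)) x +
          (lam : ℂ) ^ 2 * Xop (a j) (Xop (a j) (fun y => (f y : ℂ))) x +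
          (lam : ℂ) ^ 3 * (Complex.I * Xop (a j) (fun y => (f y : ℂ)) x) ^ 2))) +
    (lam : ℂ) * Xop a0 (fun y => (f y : ℂ)) x

open scoped ComplexConjugate

section IntegrationByParts

variable {E : Type*} [NormedAddCommGroup E] [NormedSpace ℝ E] [FiniteDimensional ℝ E]
  [MeasurableSpace E] [BorelSpace E] {μ : Measure E} [μ.IsAddHaarMeasure]

theorem abs_integral_mul_fderiv_le {ψ m : E → ℝ} (hψ : ContDiff ℝ 1 ψ)
    (hm : ContDiff ℝ 1 m) (hm0 : 0 ≤ m) {K : Set E} (hK : IsCompact K) (hmK : tsupport m ⊆ K) (e : E) {C : ℝ}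
    (hC : ∀ x ∈ K, |fderiv ℝ ψ x e| ≤ C) :
    |∫ x, ψ x * fderiv ℝ m x e ∂μ| ≤ C * ∫ x, m x ∂μ := by
  have hmc : HasCompactSupport m := hK.of_isClosed_subset (isClosed_tsupport m) hmK
  have hψ' : Continuous fun x => fderiv ℝ ψ x e :=
    (hψ.continuous_fderiv one_ne_zero).clm_apply continuous_const
  have hm' : Continuous fun x => fderiv ℝ m x e :=
    (hm.continuous_fderiv one_ne_zero).clm_apply continuous_const
  rw [integral_mul_fderiv_eq_neg_fderiv_mul_of_integrable
      ((hψ'.mul hm.continuous).integrable_of_hasCompactSupport hmc.mul_left)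
      ((hψ.continuous.mul hm').integrable_of_hasCompactSupport
        (hmc.fderiv_apply ℝ e).mul_left)
      ((hψ.continuous.mul hm.continuous).integrable_of_hasCompactSupport hmc.mul_left)
      (fun x _ => hψ.differentiable one_ne_zero x) (fun x _ => hm.differentiable one_ne_zero x),
    abs_neg, ← integral_const_mul, ← Real.norm_eq_abs]
  refine norm_integral_le_of_norm_le
    ((hm.continuous.integrable_of_hasCompactSupport hmc).const_mul C) (.of_forall fun x => ?_)
  rw [norm_mul, Real.norm_eq_abs, Real.norm_of_nonneg (hm0 x)]
  by_cases hx : x ∈ K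
  · exact mul_le_mul_of_nonneg_right (hC x hx) (hm0 x)
  · simp [image_eq_zero_of_notMem_tsupport fun h => hx (hmK h)]

end IntegrationByParts

/-- The real vector field `iX` with coefficients `a`, applied to a real function. -/
def vfDeriv (a : Coeffs n) (h : Spc n → ℝ) (x : Spc n) : ℝ :=
  ∑ k, a k x * fderiv ℝ h x (EuclideanSpace.single k 1)

theorem contDiff_fderiv_apply {F : Type*} [NormedAddCommGroup F] [NormedSpace ℝ F]
    {u : Spc n → F} (hu : ContDiff ℝ (⊤ : ℕ∞) u) (e : Spc n) :
    ContDiff ℝ (⊤ : ℕ∞) fun x => fderiv ℝ u x e :=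
  (hu.fderiv_right (by simp)).clm_apply contDiff_const

theorem contDiff_vfDeriv {a : Coeffs n} (ha : SmoothCoeffs a) {h : Spc n → ℝ}
    (hh : ContDiff ℝ (⊤ : ℕ∞) h) : ContDiff ℝ (⊤ : ℕ∞) (vfDeriv a h) :=
  ContDiff.sum fun k _ => (ha k).mul (contDiff_fderiv_apply hh _)

theorem contDiff_Xop {a : Coeffs n} (ha : SmoothCoeffs a) {u : Spc n → ℂ}
    (hu : ContDiff ℝ (⊤ : ℕ∞) u) : ContDiff ℝ (⊤ : ℕ∞) (Xop a u) :=
  ContDiff.sum fun k _ => (Complex.ofRealCLM.contDiff.comp (ha k)).mul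
    (contDiff_const.mul (contDiff_fderiv_apply hu _))

theorem contDiff_dfun {a : Coeffs n} (ha : SmoothCoeffs a) : ContDiff ℝ (⊤ : ℕ∞) (dfun a) :=
  ContDiff.sum fun k _ =>
    contDiff_const.mul (Complex.ofRealCLM.contDiff.comp (contDiff_fderiv_apply (ha k) _))

theorem contDiff_Xstar {a : Coeffs n} (ha : SmoothCoeffs a) {u : Spc n → ℂ}
    (hu : ContDiff ℝ (⊤ : ℕ∞) u) : ContDiff ℝ (⊤ : ℕ∞) (Xstar a u) :=
  (contDiff_Xop ha hu).add ((contDiff_dfun ha).mul hu)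

theorem Xop_ofReal (a : Coeffs n) {h : Spc n → ℝ} (hh : Differentiable ℝ h) :
    Xop a (fun y => (h y : ℂ)) = fun x => -Complex.I * vfDeriv a h x := by
  ext x
  have hd : fderiv ℝ (fun y => (h y : ℂ)) x = Complex.ofRealCLM.comp (fderiv ℝ h x) :=
    (Complex.ofRealCLM.hasFDerivAt.comp x (hh x).hasFDerivAt).fderiv
  simp only [Xop, pd, vfDeriv, hd, ContinuousLinearMap.coe_comp, Function.comp_apply,
    Complex.ofRealCLM_apply]
  push_cast
  rw [Finset.mul_sum]
  exact Finset.sum_congr rfl fun k _ => by ring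

theorem Xop_const_mul (a : Coeffs n) {u : Spc n → ℂ} (hu : Differentiable ℝ u) (c : ℂ) :
    Xop a (fun y => c * u y) = fun x => c * Xop a u x := by
  ext x
  simp only [Xop, pd, fderiv_const_mul (hu x), Finset.mul_sum]
  exact Finset.sum_congr rfl fun k _ => by simp; ring

theorem Xop_Xop_ofReal {a b : Coeffs n} (hb : SmoothCoeffs b) {h : Spc n → ℝ}
    (hh : ContDiff ℝ (⊤ : ℕ∞) h) :
    Xop a (Xop b fun y => (h y : ℂ)) = fun x => ((-vfDeriv a (vfDeriv b h) x : ℝ) : ℂ) := by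
  have hbh : Differentiable ℝ (vfDeriv b h) := (contDiff_vfDeriv hb hh).differentiable (by simp)
  have hbh' : Differentiable ℝ fun y => (vfDeriv b h y : ℂ) :=
    Complex.ofRealCLM.differentiable.comp hbh
  rw [Xop_ofReal b (hh.differentiable (by simp)), Xop_const_mul a hbh', Xop_ofReal a hbh]
  ext x
  push_cast
  ring_nf
  simp

theorem ip_const_mul (c : ℂ) (u v : Spc n → ℂ) : ip (fun x => c * u x) v = c * ip u v := by
  simp only [ip, mul_assoc, integral_const_mul]

theorem ip_sum {ι : Type*} (s : Finset ι) (u : ι → Spc n → ℂ) (v : Spc n → ℂ)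
    (hu : ∀ i ∈ s, Integrable fun x => u i x * conj (v x)) :
    ip (fun x => ∑ i ∈ s, u i x) v = ∑ i ∈ s, ip (u i) v := by
  simp only [ip, Finset.sum_mul]
  exact integral_finsetSum s hu

theorem TestOn.integrable_mul_conj {K : Set (Spc n)} (hK : IsCompact K) {v : Spc n → ℂ}
    (hv : TestOn K v) {u : Spc n → ℂ} (hu : Continuous u) :
    Integrable fun x => u x * conj (v x) :=
  (hu.mul (Complex.continuous_conj.comp hv.1.continuous)).integrable_of_hasCompactSupport
    (HasCompactSupport.comp_left (hK.of_isClosed_subset (isClosed_tsupport v) hv.2)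
      (map_zero conj)).mul_left

theorem ip_mul_sumXsX {N : ℕ} {a : Fin N → Coeffs n} (ha : ∀ j, SmoothCoeffs (a j))
    {K : Set (Spc n)} (hK : IsCompact K) {v : Spc n → ℂ} (hv : TestOn K v) {g : Spc n → ℂ}
    (hg : Continuous g) :
    ip (fun x => g x * sumXsX a v x) v =
      ∑ j, ip (fun x => g x * Xstar (a j) (Xop (a j) v) x) v := by
  simp only [sumXsX, Finset.mul_sum]
  exact ip_sum _ _ _ fun j _ => hv.integrable_mul_conj hK <|
    hg.mul (contDiff_Xstar (ha j) (contDiff_Xop (ha j) hv.1)).continuous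

theorem fderiv_norm_sq_comp_apply {u : Spc n → ℂ} {x : Spc n} (hu : DifferentiableAt ℝ u x)
    (e : Spc n) :
    fderiv ℝ (fun y => ‖u y‖ ^ 2) x e = 2 * (fderiv ℝ u x e * conj (u x)).re := by
  rw [hu.hasFDerivAt.norm_sq.fderiv]
  simp [Complex.inner]
  ring

theorem im_ofReal_mul_Xop_mul_conj (a : Coeffs n) (w : Spc n → ℝ) {v : Spc n → ℂ}
    (hv : Differentiable ℝ v) (x : Spc n) :
    ((w x : ℂ) * Xop a v x * conj (v x)).im =
      -(1 / 2) * ∑ k, w x * a k x *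
        fderiv ℝ (fun y => ‖v y‖ ^ 2) x (EuclideanSpace.single k 1) := by
  simp only [Xop, pd, fderiv_norm_sq_comp_apply (hv x), Finset.mul_sum, Finset.sum_mul,
    Complex.im_sum]
  refine Finset.sum_congr rfl fun k _ => ?_
  simp [Complex.mul_re, Complex.mul_im]
  ring

theorem exists_abs_im_ip_ofReal_mul_Xop_le {a : Coeffs n} (ha : SmoothCoeffs a)
    {w : Spc n → ℝ} (hw : ContDiff ℝ (⊤ : ℕ∞) w) {K : Set (Spc n)} (hK : IsCompact K) :
    ∃ C, 0 ≤ C ∧ ∀ v, TestOn K v →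
      |(ip (fun x => (w x : ℂ) * Xop a v x) v).im| ≤ C * l2sq v := by
  set e : Fin (n + 1) → Spc n := fun k => EuclideanSpace.single k 1
  have hψ (k) : ContDiff ℝ (⊤ : ℕ∞) fun x => w x * a k x := hw.mul (ha k)
  choose C hC using fun k => hK.exists_bound_of_continuousOn
    (contDiff_fderiv_apply (hψ k) (e k)).continuous.continuousOn
  refine ⟨1 / 2 * ∑ k, |C k|, by positivity, fun v hv => ?_⟩
  set m : Spc n → ℝ := fun y => ‖v y‖ ^ 2
  have hm : ContDiff ℝ (⊤ : ℕ∞) m := hv.1.norm_sq ℝ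
  have hmK : tsupport m ⊆ K :=
    (tsupport_comp_subset (g := fun z : ℂ => ‖z‖ ^ 2) (by simp) v).trans hv.2
  have hmc : HasCompactSupport m := hK.of_isClosed_subset (isClosed_tsupport m) hmK
  have hint (k) : Integrable fun x => w x * a k x * fderiv ℝ m x (e k) :=
    ((hψ k).continuous.mul (contDiff_fderiv_apply hm (e k)).continuous
      ).integrable_of_hasCompactSupport (hmc.fderiv_apply ℝ (e k)).mul_left
  have him : (ip (fun x => (w x : ℂ) * Xop a v x) v).im =
      -(1 / 2) * ∑ k, ∫ x, w x * a k x * fderiv ℝ m x (e k) := by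
    have hwX : Continuous fun x => (w x : ℂ) * Xop a v x :=
      (Complex.continuous_ofReal.comp hw.continuous).mul (contDiff_Xop ha hv.1).continuous
    refine (Complex.imCLM.integral_comp_comm (hv.integrable_mul_conj hK hwX)).symm.trans ?_
    simp only [Complex.imCLM_apply,
      im_ofReal_mul_Xop_mul_conj a w (hv.1.differentiable (by simp))]
    rw [integral_const_mul, integral_finsetSum _ fun k _ => hint k]
  rw [him, abs_mul, abs_neg, abs_of_pos (by norm_num : (0 : ℝ) < 1 / 2), mul_assoc,
    Finset.sum_mul]
  gcongr
  refine (Finset.abs_sum_le_sum_abs _ _).trans (Finset.sum_le_sum fun k _ => ?_)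
  exact abs_integral_mul_fderiv_le ((hψ k).of_le (by simp)) (hm.of_le (by simp))
    (fun x => sq_nonneg _) hK hmK (e k)
    fun x hx => (Real.norm_eq_abs _ ▸ hC k x hx).trans (le_abs_self _)

theorem stmt10_general (n N : ℕ) (hN : 0 < N)
    (a : Fin N → Coeffs n) (ha : ∀ j, SmoothCoeffs (a j))
    (f : Spc n → ℝ) (hf : ContDiff ℝ (⊤ : ℕ∞) f)
    (lam : ℝ)
    (K : Set (Spc n)) (hK : IsCompact K) :
    ∃ CK : ℝ, 0 < CK ∧ ∀ v : Spc n → ℂ, TestOn K v →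
      lam * (∑ j,
          ((ip (fun x => (-Complex.I * Xop (a ⟨0, hN⟩) (fun y => (f y : ℂ)) x) *
                Xstar (a j) (Xop (a j) v) x) v) -
            Complex.I * ip (fun x =>
                Xop (a j) (Xop (a ⟨0, hN⟩) (fun y => (f y : ℂ))) x * Xop (a j) v x) v).re) -
          CK * l2sq v ≤
        (ip (fun x => (lam : ℂ) * Xop (a ⟨0, hN⟩) (fun y => (f y : ℂ)) x * sumXsX a v x)
          v).im := by
  set j₁ : Fin N := ⟨0, hN⟩
  choose C hC0 hC using fun j => exists_abs_im_ip_ofReal_mul_Xop_le (ha j)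
    (contDiff_vfDeriv (ha j) (contDiff_vfDeriv (ha j₁) hf)).neg hK
  have hCK : 0 < 1 + |lam| * ∑ j, C j :=
    add_pos_of_pos_of_nonneg one_pos
      (mul_nonneg (abs_nonneg lam) (Finset.sum_nonneg fun j _ => hC0 j))
  refine ⟨_, hCK, fun v hv => ?_⟩
  have hg : Continuous (Xop (a j₁) fun y => (f y : ℂ)) :=
    (contDiff_Xop (ha j₁) (Complex.ofRealCLM.contDiff.comp hf)).continuous
  -- the second-order terms on the two sides cancel exactly
  simp only [Xop_Xop_ofReal (ha j₁) hf, mul_assoc, ip_const_mul, ip_mul_sumXsX ha hK hv hg]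
  simp only [Complex.im_ofReal_mul, Complex.im_sum, Complex.sub_re, neg_mul, Complex.neg_re,
    Complex.I_mul_re, neg_neg, sub_neg_eq_add, Finset.sum_add_distrib, mul_add, add_sub_assoc,
    add_le_iff_nonpos_right, sub_nonpos]
  have hl2 : 0 ≤ l2sq v := integral_nonneg fun _ => sq_nonneg _
  calc lam * ∑ j, _ ≤ |lam| * ∑ j, C j * l2sq v := (le_abs_self _).trans <| by
        rw [abs_mul]
        gcongr
        exact (Finset.abs_sum_le_sum_abs _ _).trans (Finset.sum_le_sum fun j _ => hC j v hv)
    _ ≤ (1 + |lam| * ∑ j, C j) * l2sq v := by rw [← Finset.sum_mul]; nlinarith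

/-- for `L₂ = λ(X₁f)∑ⱼXⱼ^*Xⱼ`,
`Im(L₂v, v) ≥ λ∑ⱼ Re( ((-iX₁f)Xⱼ^*Xⱼv, v) - i((XⱼX₁f)Xⱼv, v) ) - C_K‖v‖²`. -/
theorem stmt10 (n N : ℕ) (hN : 0 < N)
    (a : Fin N → Coeffs n) (ha : ∀ j, SmoothCoeffs (a j))
    (f : Spc n → ℝ) (hf : ContDiff ℝ (⊤ : ℕ∞) f)
    (lam : ℝ) (hlam : 1 ≤ lam)
    (K : Set (Spc n)) (hK : IsCompact K) :
    ∃ CK : ℝ, 0 < CK ∧ ∀ v : Spc n → ℂ, TestOn K v →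
      lam * (∑ j,
          ((ip (fun x => (-Complex.I * Xop (a ⟨0, hN⟩) (fun y => (f y : ℂ)) x) *
                Xstar (a j) (Xop (a j) v) x) v) -
            Complex.I * ip (fun x =>
                Xop (a j) (Xop (a ⟨0, hN⟩) (fun y => (f y : ℂ))) x * Xop (a j) v x) v).re) -
          CK * l2sq v ≤
        (ip (fun x => (lam : ℂ) * Xop (a ⟨0, hN⟩) (fun y => (f y : ℂ)) x * sumXsX a v x)
          v).im :=
  stmt10_general n N hN a ha f hf lam K hK

end Carleman
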